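/- arXiv:1601.07604 — 2 statements merged into one kernel-verified Lean document; each statement's English description precedes it below -/
import Mathlib

section
/- Let ≺ be a monomial order on S = K[t_1,…,t_s], let I ⊂ S be an ideal, and let f be a polynomial of S of positive degree. If the leading monomial in_≺(f) is a regular element (non-zero-divisor) on S/in_≺(I), then f is a regular element on S/I. -/
open MvPolynomial Finsupp Filter

namespace MDF

open scoped Classical

variable (K : Type*) [Field K] (s : ℕ)

/-- The Hilbert function of `S/I` in degree `d`: `dim_K (S_d / I_d)`. -/
noncomputable def hilbertFn (I : Ideal (MvPolynomial (Fin s) K)) (d : ℕ) : ℕ :=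
  Module.finrank K
    ((homogeneousSubmodule (Fin s) K d) ⧸
      (Submodule.comap (homogeneousSubmodule (Fin s) K d).subtype (I.restrictScalars K)))

/-- The Krull dimension of `S/I`, as a natural number. -/
noncomputable def krullDimQ (I : Ideal (MvPolynomial (Fin s) K)) : ℕ :=
  (WithTop.untopD 0 (WithBot.unbotD 0 (ringKrullDim (MvPolynomial (Fin s) K ⧸ I))))

/-- The degree (multiplicity) of `S/I`: if `k = dim (S/I) ≥ 1`, it is
`(k-1)! · lim_d H_I(d)/d^(k-1)`, and it is `dim_K (S/I)` if `k = 0`. -/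
noncomputable def degQ (I : Ideal (MvPolynomial (Fin s) K)) : ℕ :=
  if krullDimQ K s I = 0 then Module.finrank K (MvPolynomial (Fin s) K ⧸ I)
  else Classical.epsilon (fun D : ℕ =>
    Tendsto (fun d : ℕ => (hilbertFn K s I d : ℝ) / (d : ℝ) ^ (krullDimQ K s I - 1)) atTop
      (nhds ((D : ℝ) / (Nat.factorial (krullDimQ K s I - 1)))))

/-- The regularity of the Hilbert function of `S/I`: the least `r ≥ 0` from which the
Hilbert function agrees with a polynomial (necessarily the Hilbert polynomial). -/
noncomputable def regQ (I : Ideal (MvPolynomial (Fin s) K)) : ℕ :=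
  sInf { r : ℕ | ∃ P : Polynomial ℚ, ∀ d : ℕ, r ≤ d → (hilbertFn K s I d : ℚ) = P.eval (d : ℚ) }

/-- The height of an ideal: the infimum of the heights of the primes containing it. -/
noncomputable def heightQ (I : Ideal (MvPolynomial (Fin s) K)) : ℕ∞ :=
  ⨅ p ∈ { p : PrimeSpectrum (MvPolynomial (Fin s) K) | I ≤ p.asIdeal }, Order.height p

/-- An ideal is a complete intersection if it can be generated by `ht(I)` elements. -/
def IsCompleteIntersection (I : Ideal (MvPolynomial (Fin s) K)) : Prop :=
  ∃ (n : ℕ) (f : Fin n → MvPolynomial (Fin s) K),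
    (n : ℕ∞) = heightQ K s I ∧ I = Ideal.span (Set.range f)

/-- An ideal is unmixed if all its associated primes have the same height. -/
def IsUnmixed (I : Ideal (MvPolynomial (Fin s) K)) : Prop :=
  ∀ p ∈ associatedPrimes (MvPolynomial (Fin s) K) (MvPolynomial (Fin s) K ⧸ I),
    ∀ q ∈ associatedPrimes (MvPolynomial (Fin s) K) (MvPolynomial (Fin s) K ⧸ I),
      heightQ K s p = heightQ K s q

/-- A graded (homogeneous) ideal: it contains all homogeneous components of its elements. -/
def IsGradedIdeal (I : Ideal (MvPolynomial (Fin s) K)) : Prop :=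
  ∀ f ∈ I, ∀ n : ℕ, homogeneousComponent n f ∈ I

variable {K s} in
/-- A graded monomial order: one refining the total degree. -/
def IsGradedOrder (m : MonomialOrder (Fin s)) : Prop :=
  ∀ a b : Fin s →₀ ℕ, a.degree < b.degree → m.toSyn a < m.toSyn b

variable {s} in
/-- The leading exponent (exponent of the leading monomial) of a polynomial with respect
to a monomial order.  (It is `0` by convention for the zero polynomial.) -/
noncomputable def lExp (m : MonomialOrder (Fin s)) (f : MvPolynomial (Fin s) K) :
    Fin s →₀ ℕ :=
  m.toSyn.symm (f.support.sup (fun a => m.toSyn a))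

variable {s} in
/-- The initial ideal of `I`: the ideal generated by the leading monomials of the nonzero
elements of `I`. -/
noncomputable def initIdeal (m : MonomialOrder (Fin s)) (I : Ideal (MvPolynomial (Fin s) K)) :
    Ideal (MvPolynomial (Fin s) K) :=
  Ideal.span { g | ∃ f ∈ I, f ≠ 0 ∧ g = monomial (lExp K m f) (1 : K) }

variable {s} in
/-- `f` is (or represents) a zero divisor of `S/I`. -/
def IsZeroDivOn (I : Ideal (MvPolynomial (Fin s) K)) (f : MvPolynomial (Fin s) K) : Prop :=
  ∃ g, g ∉ I ∧ f * g ∈ I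

variable {s} in
/-- The set `M_{≺,d}` of exponents of the standard monomials of degree `d` that are
zero divisors of `S/in_≺(I)`. -/
noncomputable def Mset (m : MonomialOrder (Fin s)) (I : Ideal (MvPolynomial (Fin s) K))
    (d : ℕ) : Set (Fin s →₀ ℕ) :=
  { a | a.degree = d ∧ monomial a (1 : K) ∉ initIdeal K m I ∧
      IsZeroDivOn K (initIdeal K m I) (monomial a (1 : K)) }

variable {s} in
/-- The set `F_{≺,d}` of nonzero zero divisors of `S/I` which are `K`-linear combinations
of standard monomials of degree `d`. -/
noncomputable def Fset (m : MonomialOrder (Fin s)) (I : Ideal (MvPolynomial (Fin s) K))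
    (d : ℕ) : Set (MvPolynomial (Fin s) K) :=
  { f | f ≠ 0 ∧ (∀ a ∈ f.support, a.degree = d ∧ monomial a (1 : K) ∉ initIdeal K m I) ∧
      IsZeroDivOn K I f }

variable {s} in
/-- The footprint function `fp_I`. -/
noncomputable def fp (m : MonomialOrder (Fin s)) (I : Ideal (MvPolynomial (Fin s) K))
    (d : ℕ) : ℤ :=
  if (Mset K m I d).Nonempty then
    (degQ K s I : ℤ) -
      sSup ((fun a => (degQ K s (initIdeal K m I ⊔ Ideal.span {monomial a (1 : K)}) : ℤ)) ''
        Mset K m I d)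
  else (degQ K s I : ℤ)

variable {s} in
/-- The minimum distance function `δ_I`. -/
noncomputable def delta (m : MonomialOrder (Fin s)) (I : Ideal (MvPolynomial (Fin s) K))
    (d : ℕ) : ℤ :=
  if (Fset K m I d).Nonempty then
    (degQ K s I : ℤ) -
      sSup ((fun f => (degQ K s (I ⊔ Ideal.span {f}) : ℤ)) '' Fset K m I d)
  else (degQ K s I : ℤ)

variable {s} in
/-- The vanishing ideal of a set of points of projective space: the ideal generated by
the homogeneous polynomials vanishing at (representatives of) all points of `X`. -/
noncomputable def vanishingIdeal (X : Set (Projectivization K (Fin s → K))) :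
    Ideal (MvPolynomial (Fin s) K) :=
  Ideal.span { f | (∃ n, f.IsHomogeneous n) ∧ ∀ p ∈ X, eval p.rep f = 0 }

variable {s} in
/-- The set of zeros in `X` of a (homogeneous) polynomial `f`. -/
def VX (X : Set (Projectivization K (Fin s → K))) (f : MvPolynomial (Fin s) K) :
    Set (Projectivization K (Fin s → K)) :=
  { p ∈ X | eval p.rep f = 0 }


/-! If `f * g ∈ I` with `g ≠ 0`, then `in(f) * in(g) = in(f * g) ∈ in(I)`, so regularity of
`in(f)` puts `in(g)` in `in(I)`: some `p ∈ I` has the same leading term as `g`. Then `g - p` is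
again killed by `f` modulo `I` and has a smaller leading monomial, so `g ∈ I` follows by
well-founded induction on the leading monomial. -/

open scoped MonomialOrder

theorem _root_.Ideal.Quotient.isLeftRegular_mk_iff {R : Type*} [CommRing R] {I : Ideal R}
    {a : R} : IsLeftRegular (Ideal.Quotient.mk I a) ↔ ∀ x, a * x ∈ I → x ∈ I := by
  simp only [isLeftRegular_iff_right_eq_zero_of_mul, Ideal.Quotient.mk_surjective.forall,
    ← map_mul, Ideal.Quotient.eq_zero_iff_mem]

theorem _root_.MonomialOrder.degree_sub_lt_of_leadingTerm_eq {σ R : Type*} [CommRing R]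
    {m : MonomialOrder σ} {p q : MvPolynomial σ R} (hpq : m.leadingTerm p = m.leadingTerm q)
    (hne : p ≠ q) : m.degree (p - q) ≺[m] m.degree p := by
  obtain ⟨-, hdeg⟩ := m.leadingTerm_eq_leadingTerm_iff.mp hpq
  have hp : m.degree p ≠ 0 := by
    have eq_leadingTerm (r : MvPolynomial σ R) (hr : m.degree r = 0) : r = m.leadingTerm r := by
      rw [MonomialOrder.leadingTerm, hr, ← C_apply]
      exact m.eq_C_of_degree_eq_zero hr
    intro h0
    exact hne (by rw [eq_leadingTerm p h0, eq_leadingTerm q (hdeg ▸ h0), hpq])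
  have hsplit : p - q = (p - m.leadingTerm p) - (q - m.leadingTerm q) := by
    rw [hpq]; ring
  rw [hsplit]
  refine lt_of_le_of_lt m.degree_sub_le (max_lt (m.degree_sub_leadingTerm_lt_degree hp) ?_)
  rw [hdeg]
  exact m.degree_sub_leadingTerm_lt_degree (hdeg ▸ hp)

section

variable {K : Type*} [Field K] {s : ℕ} {m : MonomialOrder (Fin s)}

theorem lExp_eq_degree (f : MvPolynomial (Fin s) K) : lExp K m f = m.degree f := rfl

theorem initIdeal_eq_span_monomial_degree (I : Ideal (MvPolynomial (Fin s) K)) :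
    initIdeal K m I =
      Ideal.span ((fun a ↦ monomial a (1 : K)) '' (m.degree '' {p | p ∈ I ∧ p ≠ 0})) := by
  rw [Set.image_image, initIdeal]
  congr 1
  ext g
  simp [eq_comm, and_assoc, lExp_eq_degree]

theorem monomial_degree_mem_initIdeal {I : Ideal (MvPolynomial (Fin s) K)}
    {p : MvPolynomial (Fin s) K} (hp : p ∈ I) (hp0 : p ≠ 0) :
    monomial (m.degree p) (1 : K) ∈ initIdeal K m I :=
  Ideal.subset_span ⟨p, hp, hp0, rfl⟩

theorem exists_leadingTerm_eq_of_monomial_degree_mem_initIdeal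
    {I : Ideal (MvPolynomial (Fin s) K)} {g : MvPolynomial (Fin s) K}
    (hg : monomial (m.degree g) (1 : K) ∈ initIdeal K m I) :
    ∃ p ∈ I, m.leadingTerm p = m.leadingTerm g := by
  rw [initIdeal_eq_span_monomial_degree, mem_ideal_span_monomial_image] at hg
  obtain ⟨-, ⟨p, ⟨hpI, hp0⟩, rfl⟩, hle⟩ := hg (m.degree g) (by simp)
  obtain ⟨b, hb⟩ := le_iff_exists_add.mp hle
  have hlc : m.leadingCoeff p ≠ 0 := m.leadingCoeff_ne_zero_iff.mpr hp0
  refine ⟨monomial b (m.leadingCoeff g / m.leadingCoeff p) * p, I.mul_mem_left _ hpI, ?_⟩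
  rw [m.leadingTerm_mul, m.leadingTerm_monomial, MonomialOrder.leadingTerm, monomial_mul,
    div_mul_cancel₀ _ hlc, add_comm, ← hb, MonomialOrder.leadingTerm]

theorem mem_of_mul_mem_of_leadingMonomial_regular {I : Ideal (MvPolynomial (Fin s) K)}
    {f g : MvPolynomial (Fin s) K} (hf : f ≠ 0)
    (hreg : ∀ x, monomial (m.degree f) (1 : K) * x ∈ initIdeal K m I → x ∈ initIdeal K m I)
    (hfg : f * g ∈ I) : g ∈ I := by
  induction h : m.toSyn (m.degree g) using WellFoundedLT.induction generalizing g with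
  | ind d ih =>
  rcases eq_or_ne g 0 with rfl | hg
  · exact I.zero_mem
  have hlead : monomial (m.degree g) (1 : K) ∈ initIdeal K m I := by
    apply hreg
    rw [monomial_mul, one_mul, ← m.degree_mul hf hg]
    exact monomial_degree_mem_initIdeal hfg (mul_ne_zero hf hg)
  obtain ⟨p, hpI, hp⟩ := exists_leadingTerm_eq_of_monomial_degree_mem_initIdeal hlead
  rcases eq_or_ne g p with rfl | hne
  · exact hpI
  have hfgp : f * (g - p) ∈ I := by
    rw [mul_sub]
    exact I.sub_mem hfg (I.mul_mem_left f hpI)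
  have hgp : g - p ∈ I := ih _ (h ▸ m.degree_sub_lt_of_leadingTerm_eq hp.symm hne) hfgp rfl
  simpa using I.add_mem hgp hpI

end

/-- If the leading monomial of `f` is a regular element (non-zero-divisor)
on `S/in_≺(I)`, then `f` is a regular element on `S/I`. -/
theorem regular_of_leadingMonomial_regular
    {K : Type*} [Field K] {s : ℕ} (m : MonomialOrder (Fin s))
    (I : Ideal (MvPolynomial (Fin s) K)) (f : MvPolynomial (Fin s) K)
    (hf : 0 < f.totalDegree)
    (hreg : Function.Injective (fun g : MvPolynomial (Fin s) K ⧸ initIdeal K m I =>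
      Ideal.Quotient.mk (initIdeal K m I) (monomial (lExp K m f) (1 : K)) * g)) :
    Function.Injective (fun g : MvPolynomial (Fin s) K ⧸ I =>
      Ideal.Quotient.mk I f * g) := by
  have hf0 : f ≠ 0 := by
    rintro rfl
    simp at hf
  exact Ideal.Quotient.isLeftRegular_mk_iff.mpr fun _ ↦
    mem_of_mul_mem_of_leadingMonomial_regular hf0 (Ideal.Quotient.isLeftRegular_mk_iff.mp hreg)

end MDF
end

section
/- Let L be the ideal of S = K[t_1,…,t_s] generated by t_2^{d_2},…,t_s^{d_s}. If t^a = t_1^{a_1} t_r^{a_r} ⋯ t_s^{a_s} is a monomial with r ≥ 2, a_r ≥ 1, and a_i ≤ d_i − 1 for all i ≥ r (and a_i = 0 for 2 ≤ i < r), then deg(S/(L, t^a)) = deg(S/(L, t_r^{a_r} ⋯ t_s^{a_s})) = d_2 ⋯ d_s − d_2 ⋯ d_{r−1}(d_r − a_r) ⋯ (d_s − a_s). -/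
open MvPolynomial Finsupp Filter

namespace MDF

open scoped Classical

variable (K : Type*) [Field K] (s : ℕ)

/-!
Write `I_b` for the monomial ideal generated by the `t_i ^ d_i` (`i ≠ 1`) and `t ^ b`. As soon as
some `b_i` with `i ≠ 1` is positive, the radical of `I_b` is the prime `(t_2, …, t_s)` of the
`t_1`-axis, so `S/I_b` has dimension one and its degree is the eventual value of its Hilbert
function. In degree `n` this counts the standard monomials, the exponents `x` with `x_i < d_i` for
`i ≠ 1` and `b ≰ x`. For large `n` the coordinate `x_1` is determined by the others and exceeds
`b_1`, so the count is the box `∏ d_i` minus the sub-box `∏ (d_i - b_i)`. This depends only on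
`b_2, …, b_s`, which `a` shares with its truncation to the coordinates `≥ r`.

Variables are indexed from `0`, so `t_1` is `X 0`.
-/

open Finset

section Counting

variable {ι : Type*} [Fintype ι] [DecidableEq ι]

theorem mem_piFinset_ite_Ico {i₀ : ι} {lo hi y : ι → ℕ} :
    y ∈ Fintype.piFinset (fun i => if i = i₀ then {0} else Ico (lo i) (hi i)) ↔
      y i₀ = 0 ∧ ∀ i ≠ i₀, lo i ≤ y i ∧ y i < hi i := by
  simp only [Fintype.mem_piFinset]
  refine ⟨fun h => ⟨by simpa using h i₀, fun i hne => by simpa [hne] using h i⟩, ?_⟩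
  rintro ⟨h0, h⟩ i
  by_cases hne : i = i₀ <;> simp [hne, h0, h i]

theorem card_piFinset_ite_Ico (i₀ : ι) (lo hi : ι → ℕ) :
    #(Fintype.piFinset (fun i => if i = i₀ then {0} else Ico (lo i) (hi i))) =
      ∏ i ∈ univ.erase i₀, (hi i - lo i) := by
  rw [Fintype.card_piFinset, ← mul_prod_erase univ _ (mem_univ i₀), if_pos rfl, card_singleton,
    one_mul]
  exact prod_congr rfl fun i hmem => by rw [if_neg (ne_of_mem_erase hmem), Nat.card_Ico]

/-- For `n` this large, the `i₀`-th coordinate of a point of the box is determined by the others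
and is automatically at least `lo i₀`: forgetting it is a bijection onto a product of intervals. -/
theorem card_finsuppAntidiag_filter_box (i₀ : ι) (lo : ι →₀ ℕ) (hi : ι → ℕ) {n : ℕ}
    (hn : lo i₀ + ∑ i ∈ univ.erase i₀, (hi i - 1) ≤ n) :
    #{x ∈ finsuppAntidiag univ n | lo ≤ x ∧ ∀ i ≠ i₀, x i < hi i} =
      ∏ i ∈ univ.erase i₀, (hi i - lo i) := by
  have sum_eq {y : ι → ℕ} (hy : y i₀ = 0) : ∑ i, y i = ∑ i ∈ univ.erase i₀, y i := by
    rw [← add_sum_erase univ _ (mem_univ i₀), hy, zero_add]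
  rw [← card_piFinset_ite_Ico i₀ lo hi]
  refine card_nbij' (fun x => Function.update x i₀ 0)
    (fun y => Finsupp.equivFunOnFinite.symm (Function.update y i₀ (n - ∑ i, y i)))
    (fun x hx => ?_) (fun y hy => ?_) (fun x hx => ?_) (fun y hy => ?_)
  · simp only [coe_filter, mem_finsuppAntidiag, Set.mem_ofPred_eq] at hx
    refine mem_piFinset_ite_Ico.2 ⟨Function.update_self .., fun i hne => ?_⟩
    simpa only [Function.update_of_ne hne] using ⟨hx.2.1 i, hx.2.2 i hne⟩
  · rw [mem_coe, mem_piFinset_ite_Ico] at hy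
    have hle : ∑ i, y i ≤ n - lo i₀ := by
      have : ∑ i ∈ univ.erase i₀, y i ≤ ∑ i ∈ univ.erase i₀, (hi i - 1) :=
        sum_le_sum fun i hmem => by have := hy.2 i (ne_of_mem_erase hmem); omega
      rw [sum_eq hy.1]
      omega
    simp only [coe_filter, mem_finsuppAntidiag, Set.mem_ofPred_eq, subset_univ, and_true,
      Finsupp.coe_equivFunOnFinite_symm, Finsupp.le_def]
    refine ⟨?_, fun i => ?_, fun i hne => ?_⟩
    · rw [sum_update_of_mem (mem_univ i₀), ← erase_eq, ← sum_eq hy.1]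
      omega
    · rcases eq_or_ne i i₀ with rfl | hne
      · rw [Function.update_self]
        omega
      · rw [Function.update_of_ne hne]
        exact (hy.2 i hne).1
    · rw [Function.update_of_ne hne]
      exact (hy.2 i hne).2
  · simp only [coe_filter, mem_finsuppAntidiag, Set.mem_ofPred_eq] at hx
    ext i
    rcases eq_or_ne i i₀ with rfl | hne
    · rw [Finsupp.coe_equivFunOnFinite_symm, Function.update_self,
        sum_update_of_mem (mem_univ i), ← erase_eq, ← hx.1.1, ← add_sum_erase univ _ (mem_univ i)]
      omega
    · simp [hne]
  · rw [mem_coe, mem_piFinset_ite_Ico] at hy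
    ext i
    rcases eq_or_ne i i₀ with rfl | hne
    · simp [hy.1]
    · simp [hne]

end Counting

section StandardMonomials

variable {σ : Type*} [Fintype σ] [DecidableEq σ]

noncomputable def standardExponents (G : Set (σ →₀ ℕ)) (n : ℕ) : Finset (σ →₀ ℕ) :=
  {x ∈ finsuppAntidiag univ n | ∀ e ∈ G, ¬ e ≤ x}

def boxExponents (i₀ : σ) (d : σ → ℕ) (b : σ →₀ ℕ) : Set (σ →₀ ℕ) :=
  insert b ((fun i => Finsupp.single i (d i)) '' {i₀}ᶜ)

theorem card_standardExponents_boxExponents (i₀ : σ) (d : σ → ℕ) (b : σ →₀ ℕ) {n : ℕ}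
    (hn : b i₀ + ∑ i ∈ univ.erase i₀, (d i - 1) ≤ n) :
    #(standardExponents (boxExponents i₀ d b) n) =
      ∏ i ∈ univ.erase i₀, d i - ∏ i ∈ univ.erase i₀, (d i - b i) := by
  set box : Finset (σ →₀ ℕ) := {x ∈ finsuppAntidiag univ n | 0 ≤ x ∧ ∀ i ≠ i₀, x i < d i}
  have hstd : standardExponents (boxExponents i₀ d b) n = {x ∈ box | ¬ b ≤ x} := by
    ext x
    simp [standardExponents, boxExponents, box, Finsupp.single_le_iff, and_comm, and_left_comm]
  have hsub : {x ∈ box | b ≤ x} =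
      {x ∈ finsuppAntidiag (univ : Finset σ) n | b ≤ x ∧ ∀ i ≠ i₀, x i < d i} := by
    ext x
    simp [box, and_comm, and_left_comm]
  have hcard := card_filter_add_card_filter_not (s := box) (fun x => b ≤ x)
  rw [hsub, ← hstd, card_finsuppAntidiag_filter_box i₀ b d hn, card_finsuppAntidiag_filter_box i₀ 0 d
    (by rw [Finsupp.coe_zero, Pi.zero_apply]; omega)] at hcard
  simp only [Finsupp.coe_zero, Pi.zero_apply, tsub_zero] at hcard
  omega

end StandardMonomials

section HilbertFunction

variable {K : Type*} [Field K] {s : ℕ}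

theorem hilbertFn_span_monomial_image (G : Set (Fin s →₀ ℕ)) (n : ℕ) :
    hilbertFn K s (Ideal.span ((fun e => monomial e (1 : K)) '' G)) n =
      #(standardExponents G n) := by
  have mem_std {x : Fin s →₀ ℕ} : x ∈ standardExponents G n ↔ x.degree = n ∧ ∀ e ∈ G, ¬ e ≤ x := by
    simp [standardExponents, mem_finsuppAntidiag, Finsupp.degree_eq_sum]
  let coeffs : homogeneousSubmodule (Fin s) K n →ₗ[K] (standardExponents G n → K) :=
    { toFun := fun f x => coeff x.1 f.1
      map_add' := by intros; ext; simp
      map_smul' := by intros; ext; simp }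
  have hker : LinearMap.ker coeffs = Submodule.comap (homogeneousSubmodule (Fin s) K n).subtype
      ((Ideal.span ((fun e => monomial e (1 : K)) '' G)).restrictScalars K) := by
    ext f
    simp only [LinearMap.mem_ker, Submodule.mem_comap, Submodule.coe_subtype,
      Submodule.restrictScalars_mem, mem_ideal_span_monomial_image, _root_.funext_iff]
    constructor
    · intro h x hx
      rw [MvPolynomial.mem_support_iff] at hx
      by_contra! hstd
      have hdeg : x.degree = n := by
        rw [Finsupp.degree_eq_weight_one]
        exact f.2 hx
      exact hx (h ⟨x, mem_std.2 ⟨hdeg, hstd⟩⟩)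
    · intro h x
      by_contra hx
      obtain ⟨e, he, hle⟩ := h x.1 (MvPolynomial.mem_support_iff.mpr hx)
      exact (mem_std.1 x.2).2 e he hle
  have hsurj : Function.Surjective coeffs := by
    intro g
    refine ⟨⟨∑ x, monomial x.1 (g x), Submodule.sum_mem _ fun x _ =>
      (mem_homogeneousSubmodule _ _).2 (isHomogeneous_monomial _ (mem_std.1 x.2).1)⟩, ?_⟩
    ext x
    change coeff x.1 (∑ y, monomial y.1 (g y)) = g x
    simp [coeff_sum, coeff_monomial]
  rw [hilbertFn, ← hker, (LinearMap.quotKerEquivOfSurjective coeffs hsurj).finrank_eq,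
    Module.finrank_fintype_fun_eq_card, Fintype.card_coe]

end HilbertFunction

section KrullDimension

variable (K : Type*) [Field K] {σ : Type*} (i₀ : σ)

noncomputable def axisIdeal : Ideal (MvPolynomial σ K) :=
  Ideal.span (X '' {i₀}ᶜ)

noncomputable def restrictToAxis : MvPolynomial σ K →ₐ[K] Polynomial K :=
  aeval fun i => if i = i₀ then Polynomial.X else 0

theorem restrictToAxis_aeval_X (p : Polynomial K) :
    restrictToAxis K i₀ (Polynomial.aeval (X i₀) p) = p := by
  have : (restrictToAxis K i₀).comp (Polynomial.aeval (X i₀)) = AlgHom.id K _ :=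
    Polynomial.algHom_ext (by simp [restrictToAxis])
  exact AlgHom.congr_fun this p

theorem sub_aeval_restrictToAxis_mem (f : MvPolynomial σ K) :
    f - Polynomial.aeval (X i₀) (restrictToAxis K i₀ f) ∈ axisIdeal K i₀ := by
  induction f using MvPolynomial.induction_on with
  | C a => simp
  | add p q hp hq =>
    simpa only [map_add, add_sub_add_comm] using Ideal.add_mem _ hp hq
  | mul_X p i hp =>
    rcases eq_or_ne i i₀ with rfl | hi
    · simpa [restrictToAxis, sub_mul] using Ideal.mul_mem_right (X i) _ hp
    · have : restrictToAxis K i₀ (X i) = 0 := by simp [restrictToAxis, hi]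
      simpa [this] using Ideal.mul_mem_left (axisIdeal K i₀) p (Ideal.subset_span ⟨i, hi, rfl⟩)

theorem ker_restrictToAxis : RingHom.ker (restrictToAxis K i₀) = axisIdeal K i₀ := by
  refine le_antisymm (fun f hf => ?_) (Ideal.span_le.2 ?_)
  · simpa [(RingHom.mem_ker).1 hf] using sub_aeval_restrictToAxis_mem K i₀ f
  · rintro _ ⟨i, hi, rfl⟩
    simp [restrictToAxis, Set.mem_compl_singleton_iff.1 hi]

theorem isPrime_axisIdeal : (axisIdeal K i₀).IsPrime := by
  rw [← ker_restrictToAxis]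
  exact RingHom.ker_isPrime _

theorem ringKrullDim_quotient_axisIdeal :
    ringKrullDim (MvPolynomial σ K ⧸ axisIdeal K i₀) = 1 := by
  have surj : Function.Surjective (restrictToAxis K i₀) := fun p =>
    ⟨_, restrictToAxis_aeval_X K i₀ p⟩
  rw [ringKrullDim_eq_of_ringEquiv ((Ideal.quotEquivOfEq (ker_restrictToAxis K i₀).symm).trans
    (RingHom.quotientKerEquivOfSurjective surj))]
  exact IsPrincipalIdealRing.ringKrullDim_eq_one _ (Polynomial.not_isField K)

theorem ringKrullDim_quotient_eq_one_of_radical_eq_axisIdeal {I : Ideal (MvPolynomial σ K)}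
    (hI : I.radical = axisIdeal K i₀) : ringKrullDim (MvPolynomial σ K ⧸ I) = 1 := by
  rw [ringKrullDim_quotient, ← PrimeSpectrum.zeroLocus_radical, hI, ← ringKrullDim_quotient,
    ringKrullDim_quotient_axisIdeal]

end KrullDimension

section BoxIdeal

variable {K : Type*} [Field K] {σ : Type*}

theorem radical_span_monomial_boxExponents (i₀ : σ) {d : σ → ℕ} {b : σ →₀ ℕ}
    (hd : ∀ i ≠ i₀, 1 ≤ d i) (hb : ∃ i ≠ i₀, b i ≠ 0) :
    (Ideal.span ((fun e => monomial e (1 : K)) '' boxExponents i₀ d b)).radical =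
      axisIdeal K i₀ := by
  refine le_antisymm ((isPrime_axisIdeal K i₀).radical_le_iff.2 (Ideal.span_le.2 ?_))
    (Ideal.span_le.2 ?_)
  · rintro _ ⟨e, he, rfl⟩
    rw [SetLike.mem_coe, axisIdeal, mem_ideal_span_X_image]
    intro m hm
    rw [support_monomial, if_neg one_ne_zero, Finset.mem_singleton] at hm
    subst hm
    rcases he with rfl | ⟨i, hi, rfl⟩
    · exact hb
    · exact ⟨i, hi, by simpa using Nat.one_le_iff_ne_zero.1 (hd i hi)⟩
  · rintro _ ⟨i, hi, rfl⟩
    refine ⟨d i, Ideal.subset_span ⟨Finsupp.single i (d i), Or.inr ⟨i, hi, rfl⟩, ?_⟩⟩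
    exact (X_pow_eq_monomial).symm

end BoxIdeal

section Degree

variable {K : Type*} [Field K] {s : ℕ}

theorem degQ_eq_of_krullDimQ_eq_one {I : Ideal (MvPolynomial (Fin s) K)}
    (hdim : krullDimQ K s I = 1) {C N : ℕ} (hC : ∀ n ≥ N, hilbertFn K s I n = C) :
    degQ K s I = C := by
  have hlim : Tendsto (fun n => (hilbertFn K s I n : ℝ)) atTop (nhds C) :=
    tendsto_const_nhds.congr' <| (eventually_ge_atTop N).mono fun n hn => by simp [hC n hn]
  have hP : (fun D : ℕ => Tendsto
      (fun n => (hilbertFn K s I n : ℝ) / (n : ℝ) ^ (krullDimQ K s I - 1)) atTop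
      (nhds ((D : ℝ) / (krullDimQ K s I - 1).factorial))) = (C = ·) := by
    ext D
    simp only [hdim, Nat.sub_self, pow_zero, div_one, Nat.factorial_zero, Nat.cast_one]
    exact ⟨fun h => by exact_mod_cast tendsto_nhds_unique hlim h, fun h => h ▸ hlim⟩
  rw [degQ, if_neg (by omega), hP]
  exact (Classical.epsilon_spec ⟨C, rfl⟩).symm

theorem degQ_span_monomial_boxExponents [NeZero s] {d : Fin s → ℕ} {b : Fin s →₀ ℕ}
    (hd : ∀ i ≠ 0, 1 ≤ d i) (hb : ∃ i ≠ 0, b i ≠ 0) :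
    degQ K s (Ideal.span ((fun e => monomial e (1 : K)) '' boxExponents 0 d b)) =
      ∏ i ∈ univ.erase 0, d i - ∏ i ∈ univ.erase 0, (d i - b i) := by
  have hdim :
      krullDimQ K s (Ideal.span ((fun e => monomial e (1 : K)) '' boxExponents 0 d b)) = 1 := by
    rw [krullDimQ, ringKrullDim_quotient_eq_one_of_radical_eq_axisIdeal K 0
      (radical_span_monomial_boxExponents 0 hd hb)]
    rfl
  refine degQ_eq_of_krullDimQ_eq_one hdim (N := b 0 + ∑ i ∈ univ.erase 0, (d i - 1))
    fun n (hn : _ ≤ n) => ?_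
  rw [hilbertFn_span_monomial_image, card_standardExponents_boxExponents 0 d b hn]

end Degree

section FinVariables

variable {K : Type*} [Field K] {s : ℕ} [NeZero s]

theorem span_X_pow_sup_span_monomial (d : Fin s → ℕ) (b : Fin s →₀ ℕ) :
    Ideal.span {g | ∃ i : Fin s, (i : ℕ) ≠ 0 ∧ g = (X i : MvPolynomial (Fin s) K) ^ d i} ⊔
        Ideal.span {monomial b (1 : K)} =
      Ideal.span ((fun e => monomial e (1 : K)) '' boxExponents 0 d b) := by
  rw [← Ideal.span_union, boxExponents, Set.image_insert_eq, Set.insert_eq, Set.union_comm]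
  congr 2
  ext g
  simp [X_pow_eq_monomial, eq_comm]

theorem prod_erase_zero_tsub_eq {d : Fin s → ℕ} {a : Fin s →₀ ℕ} {r : Fin s} (hr : r ≠ 0)
    (hmid : ∀ i : Fin s, (i : ℕ) ≠ 0 → i < r → a i = 0) :
    ∏ i ∈ univ.erase 0, (d i - a i) =
      (∏ i ∈ univ.filter (fun i : Fin s => (i : ℕ) ≠ 0 ∧ i < r), d i) *
        ∏ i ∈ univ.filter (fun i : Fin s => r ≤ i), (d i - a i) := by
  rw [← prod_filter_mul_prod_filter_not (univ.erase 0) (· < r)]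
  congr 1
  · refine prod_congr (by ext; simp [and_comm]) fun i hi => ?_
    rw [mem_filter] at hi
    rw [hmid i hi.2.1 hi.2.2, tsub_zero]
  · refine prod_congr ?_ fun _ _ => rfl
    ext i
    simp only [mem_filter, mem_erase, mem_univ, not_lt, and_true, true_and]
    exact ⟨And.right, fun h => ⟨fun h0 => hr (le_antisymm (h0 ▸ h) (Fin.zero_le _)), h⟩⟩

end FinVariables

theorem degQ_sup_monomial_general
    {K : Type*} [Field K] {s : ℕ} (d : Fin s → ℕ)
    (hd : ∀ i : Fin s, (i : ℕ) ≠ 0 → 1 ≤ d i)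
    (L : Ideal (MvPolynomial (Fin s) K))
    (hL : L = Ideal.span
      { g | ∃ i : Fin s, (i : ℕ) ≠ 0 ∧ g = (X i : MvPolynomial (Fin s) K) ^ d i })
    (a : Fin s →₀ ℕ) (r : Fin s) (hr0 : (r : ℕ) ≠ 0) (har : 1 ≤ a r)
    (hmid : ∀ i : Fin s, (i : ℕ) ≠ 0 → i < r → a i = 0) :
    degQ K s (L ⊔ Ideal.span {(monomial a (1 : K) : MvPolynomial (Fin s) K)}) =
      degQ K s (L ⊔ Ideal.span
        {(monomial (a.filter (fun i => r ≤ i)) (1 : K) : MvPolynomial (Fin s) K)}) ∧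
    degQ K s (L ⊔ Ideal.span {(monomial a (1 : K) : MvPolynomial (Fin s) K)}) =
      (∏ i ∈ Finset.univ.filter (fun i : Fin s => (i : ℕ) ≠ 0), d i) -
        (∏ i ∈ Finset.univ.filter (fun i : Fin s => (i : ℕ) ≠ 0 ∧ i < r), d i) *
          ∏ i ∈ Finset.univ.filter (fun i : Fin s => r ≤ i), (d i - a i) := by
  have : NeZero s := NeZero.of_pos r.pos
  have hr : r ≠ 0 := Fin.val_ne_zero_iff.1 hr0
  have hdeg (b : Fin s →₀ ℕ) (hb : b r ≠ 0) :
      degQ K s (L ⊔ Ideal.span {monomial b (1 : K)}) =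
        ∏ i ∈ univ.erase 0, d i - ∏ i ∈ univ.erase 0, (d i - b i) := by
    rw [hL, span_X_pow_sup_span_monomial,
      degQ_span_monomial_boxExponents (fun i hi => hd i (Fin.val_ne_zero_iff.2 hi)) ⟨r, hr, hb⟩]
  have hprod : ∏ i ∈ univ.erase 0, (d i - a.filter (fun i => r ≤ i) i) =
      ∏ i ∈ univ.erase 0, (d i - a i) := prod_congr rfl fun i hi => by
    rw [Finsupp.filter_apply]
    split_ifs with h
    · rfl
    · rw [hmid i (Fin.val_ne_zero_iff.2 (ne_of_mem_erase hi)) (not_le.1 h)]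
  have hdom : univ.filter (fun i : Fin s => (i : ℕ) ≠ 0) = univ.erase 0 := by
    ext; simp
  rw [hdeg a (by omega), hdeg _ (by rw [Finsupp.filter_apply, if_pos le_rfl]; omega), hprod, hdom, prod_erase_zero_tsub_eq hr hmid]
  exact ⟨rfl, rfl⟩

/-- Degree formula for `S/(L, t^a)` when `L = (t_2^{d_2}, …, t_s^{d_s})`. -/
theorem degQ_sup_monomial
    {K : Type*} [Field K] {s : ℕ} (hs : 2 ≤ s) (d : Fin s → ℕ)
    (hd : ∀ i : Fin s, (i : ℕ) ≠ 0 → 1 ≤ d i)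
    (L : Ideal (MvPolynomial (Fin s) K))
    (hL : L = Ideal.span
      { g | ∃ i : Fin s, (i : ℕ) ≠ 0 ∧ g = (X i : MvPolynomial (Fin s) K) ^ d i })
    (a : Fin s →₀ ℕ) (r : Fin s) (hr0 : (r : ℕ) ≠ 0) (har : 1 ≤ a r)
    (hup : ∀ i, r ≤ i → a i ≤ d i - 1)
    (hmid : ∀ i : Fin s, (i : ℕ) ≠ 0 → i < r → a i = 0) :
    degQ K s (L ⊔ Ideal.span {(monomial a (1 : K) : MvPolynomial (Fin s) K)}) =
      degQ K s (L ⊔ Ideal.span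
        {(monomial (a.filter (fun i => r ≤ i)) (1 : K) : MvPolynomial (Fin s) K)}) ∧
    degQ K s (L ⊔ Ideal.span {(monomial a (1 : K) : MvPolynomial (Fin s) K)}) =
      (∏ i ∈ Finset.univ.filter (fun i : Fin s => (i : ℕ) ≠ 0), d i) -
        (∏ i ∈ Finset.univ.filter (fun i : Fin s => (i : ℕ) ≠ 0 ∧ i < r), d i) *
          ∏ i ∈ Finset.univ.filter (fun i : Fin s => r ≤ i), (d i - a i) :=
  degQ_sup_monomial_general d hd L hL a r hr0 har hmid

end MDF
end
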